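/- arXiv:0802.2413 — 7 statements merged into one kernel-verified Lean document; each statement's English description precedes it below -/
import Mathlib

section
/- More generally for n commodities: if p_1, ..., p_n are positive differentiable functions satisfying dp_i/dt = p_i^γ E_i(p) with γ ≠ 2, and E satisfies the Walras law Σ_i p_i E_i(p) = 0, then Σ_i p_i^{2-γ} is constant along solutions; and if γ = 2 then the product p_1 p_2 ⋯ p_n is constant along solutions. -/
open Finset

/-- First integrals for the `n`-commodity price adjustment process
`dpᵢ/dt = pᵢ^γ Eᵢ(p)` under the Walras law: `∑ pᵢ^(2-γ)` when `γ ≠ 2`,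
and `∏ pᵢ` when `γ = 2`. -/
theorem first_integral_n_commodities
    (n : ℕ) (γ : ℝ) (hγ0 : 0 ≤ γ)
    (E : (Fin n → ℝ) → (Fin n → ℝ))
    (hWalras : ∀ q : Fin n → ℝ, (∀ i, 0 < q i) → ∑ i, q i * E q i = 0)
    (p : ℝ → Fin n → ℝ)
    (hpos : ∀ t i, 0 < p t i)
    (hode : ∀ t i, HasDerivAt (fun s => p s i) ((p t i) ^ γ * E (p t) i) t) :
    (γ ≠ 2 → ∀ t : ℝ, HasDerivAt (fun s => ∑ i, (p s i) ^ (2 - γ)) 0 t) ∧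
    (γ = 2 → ∀ t : ℝ, HasDerivAt (fun s => ∏ i, p s i) 0 t) := by
  constructor
  · intro _ t
    have h1 : ∀ i : Fin n, HasDerivAt (fun s => (p s i) ^ (2 - γ))
        ((2 - γ) * (p t i * E (p t) i)) t := by
      intro i
      have := (hode t i).rpow_const (p := 2 - γ) (Or.inl (hpos t i).ne')
      convert this using 1
      have key : p t i ^ γ * p t i ^ (2 - γ - 1) = p t i := by
        rw [← Real.rpow_add (hpos t i)]
        rw [show γ + (2 - γ - 1) = 1 from by ring, Real.rpow_one]
      rw [show p t i ^ γ * E (p t) i * (2 - γ) * p t i ^ (2 - γ - 1)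
          = (2 - γ) * ((p t i ^ γ * p t i ^ (2 - γ - 1)) * E (p t) i) from by ring, key]
    have hsum : HasDerivAt (fun s => ∑ i, (p s i) ^ (2 - γ))
        (∑ i, (2 - γ) * (p t i * E (p t) i)) t := HasDerivAt.fun_sum fun i _ => h1 i
    have : (∑ i, (2 - γ) * (p t i * E (p t) i)) = 0 := by
      rw [← Finset.mul_sum, hWalras (p t) (hpos t), mul_zero]
    rwa [this] at hsum
  · intro hγ t
    have h1 : ∀ i ∈ Finset.univ, HasDerivAt (fun s => p s i)
        ((p t i) ^ γ * E (p t) i) t := fun i _ => hode t i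
    have hprod := HasDerivAt.fun_finsetProd h1
    have : (∑ i, (∏ j ∈ Finset.univ.erase i, p t j) • ((p t i) ^ γ * E (p t) i))
        = (∏ j, p t j) * ∑ i, p t i * E (p t) i := by
      rw [Finset.mul_sum]
      refine Finset.sum_congr rfl fun i _ => ?_
      have herase : (∏ j ∈ Finset.univ.erase i, p t j) * p t i = ∏ j, p t j := by
        rw [mul_comm, Finset.mul_prod_erase _ _ (Finset.mem_univ i)]
      rw [smul_eq_mul, hγ, ← herase]
      have : (p t i : ℝ) ^ (2 : ℝ) = p t i * p t i := by
        rw [show (2:ℝ) = (2:ℕ) from rfl, Real.rpow_natCast]; ring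
      rw [this]; ring
    rw [this, hWalras (p t) (hpos t), mul_zero] at hprod
    exact hprod
end

section
/- For the Scarf-Hirota excess demand E(p) = B f(p) − A u, where f_h(p) = (pᵀa_h)/(pᵀb_h), the identity [p₂p₃, p₁p₃, p₁p₂]·E(p) = pᵀ(A − ½B)p holds for all p with p₂p₃, p₁p₃, p₁p₂ well-defined (all p_i > 0). -/
open Finset Matrix

set_option maxHeartbeats 1600000 in
/-- Lemma 1: `[p₂p₃, p₁p₃, p₁p₂]·E(p) = pᵀ(A − ½B)p` for the Scarf–Hirota
excess demand `E(p) = B f(p) − A u`, where `f_h(p) = (pᵀa_h)/(pᵀb_h)`. -/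
theorem scarf_hirota_quadratic_form_identity
    (A : Matrix (Fin 3) (Fin 3) ℝ)
    (u : Fin 3 → ℝ) (hu : u = fun _ => (1 : ℝ))
    (hAu : A.mulVec u = u) (huA : Matrix.vecMul u A = u)
    (B : Matrix (Fin 3) (Fin 3) ℝ)
    (hB : B = !![0, 1, 1; 1, 0, 1; 1, 1, 0])
    (f : (Fin 3 → ℝ) → Fin 3 → ℝ)
    (hf : ∀ p h, f p h = (∑ i, p i * A i h) / (∑ i, p i * B i h))
    (E : (Fin 3 → ℝ) → Fin 3 → ℝ)
    (hE : ∀ p, E p = B.mulVec (f p) - A.mulVec u)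
    (p : Fin 3 → ℝ) (hp : ∀ i, 0 < p i) :
    p 1 * p 2 * E p 0 + p 0 * p 2 * E p 1 + p 0 * p 1 * E p 2 =
      ∑ i, ∑ j, p i * (A i j - B i j / 2) * p j := by
  have hr0 := congrFun hAu 0
  have hr1 := congrFun hAu 1
  have hr2 := congrFun hAu 2
  have hc0 := congrFun huA 0
  have hc1 := congrFun huA 1
  have hc2 := congrFun huA 2
  simp only [hu, mulVec, vecMul, dotProduct, Fin.sum_univ_three, mul_one, one_mul] at hr0 hr1 hr2 hc0 hc1 hc2
  have h02 : A 0 2 = 1 - A 0 0 - A 0 1 := by linarith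
  have h12 : A 1 2 = 1 - A 1 0 - A 1 1 := by linarith
  have h20 : A 2 0 = 1 - A 0 0 - A 1 0 := by linarith
  have h21 : A 2 1 = 1 - A 0 1 - A 1 1 := by linarith
  have h22 : A 2 2 = A 0 0 + A 0 1 + A 1 0 + A 1 1 - 1 := by linarith
  have hp0 := hp 0
  have hp1 := hp 1
  have hp2 := hp 2
  have d0 : p 1 + p 2 ≠ 0 := by positivity
  have d1 : p 0 + p 2 ≠ 0 := by positivity
  have d2 : p 0 + p 1 ≠ 0 := by positivity
  simp only [hE, hf, hu, hB, mulVec, vecMul, dotProduct, Fin.sum_univ_three,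
    Pi.sub_apply, Matrix.cons_val_zero, Matrix.cons_val_one, Matrix.head_cons,
    Matrix.cons_val_two, Matrix.vecHead, Matrix.vecTail, Matrix.tail_cons, Function.comp,
    mul_one, one_mul, mul_zero, zero_mul, add_zero, zero_add]
  rw [h02, h12, h20, h21, h22]
  norm_num [Matrix.cons_val_two, Matrix.vecHead, Matrix.vecTail]
  field_simp
  ring
end

section
/- If d₁, d₂, d₃ are nonnegative reals with d₁+d₂+d₃ > 0 and H := 4(d₁d₂+d₂d₃+d₃d₁) − (d₁+d₂+d₃)² > 0, then the symmetric matrix C (diagonal d₁,d₂,d₃, off-diagonal entries (d₃−d₁−d₂)/2, (d₂−d₁−d₃)/2, (d₁−d₂−d₃)/2) is positive semidefinite, and pᵀCp > 0 for every p not proportional to (1,1,1)ᵀ. -/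
open Finset Matrix

/-- If `d₁,d₂,d₃ ≥ 0`, `d₁+d₂+d₃ > 0` and `H > 0`, then `C` is positive semidefinite and
`pᵀCp > 0` for every `p` not proportional to `(1,1,1)ᵀ`. -/
theorem C_posSemidef_of_H_pos
    (d₁ d₂ d₃ : ℝ) (hd₁ : 0 ≤ d₁) (hd₂ : 0 ≤ d₂) (hd₃ : 0 ≤ d₃)
    (hsum : 0 < d₁ + d₂ + d₃)
    (hH : 0 < 4 * (d₁ * d₂ + d₂ * d₃ + d₃ * d₁) - (d₁ + d₂ + d₃) ^ 2)
    (C : Matrix (Fin 3) (Fin 3) ℝ)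
    (hC : C = !![d₁, (d₃ - d₁ - d₂) / 2, (d₂ - d₁ - d₃) / 2;
                 (d₃ - d₁ - d₂) / 2, d₂, (d₁ - d₂ - d₃) / 2;
                 (d₂ - d₁ - d₃) / 2, (d₁ - d₂ - d₃) / 2, d₃]) :
    C.PosSemidef ∧
      ∀ p : Fin 3 → ℝ, (∀ c : ℝ, p ≠ c • (fun _ => (1 : ℝ))) →
        0 < ∑ i, ∑ j, p i * C i j * p j := by
  have hd1 : 0 < d₁ := by nlinarith [sq_nonneg (d₁ + d₂ - d₃)]
  have hd2 : 0 < d₂ := by nlinarith [sq_nonneg (d₁ + d₂ - d₃)]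
  have key : ∀ x y : ℝ, 0 ≤ d₁ * x ^ 2 + (d₃ - d₁ - d₂) * x * y + d₂ * y ^ 2 := by
    intro x y
    nlinarith [sq_nonneg (2 * d₁ * x + (d₃ - d₁ - d₂) * y), sq_nonneg y, hd1, hH]
  constructor
  · rw [Matrix.posSemidef_iff_dotProduct_mulVec]
    constructor
    · rw [hC]
      ext i j
      fin_cases i <;> fin_cases j <;> simp [Matrix.conjTranspose, Matrix.vecHead, Matrix.vecTail]
    · intro x
      have := key (x 0 - x 2) (x 1 - x 2)
      simp only [star_trivial, dotProduct, Matrix.mulVec, Fin.sum_univ_three, hC]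
      simp [Matrix.cons_val_zero, Matrix.cons_val_one]
      nlinarith [this]
  · intro p hp
    have hne : p 0 - p 2 ≠ 0 ∨ p 1 - p 2 ≠ 0 := by
      by_contra h
      push_neg at h
      obtain ⟨h1, h2⟩ := h
      apply hp (p 2)
      funext i
      fin_cases i <;> simp <;> linarith
    have hpos : 0 < d₁ * (p 0 - p 2) ^ 2 + (d₃ - d₁ - d₂) * (p 0 - p 2) * (p 1 - p 2)
        + d₂ * (p 1 - p 2) ^ 2 := by
      set x := p 0 - p 2
      set y := p 1 - p 2
      rcases eq_or_ne y 0 with hy | hy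
      · rcases hne with hx | hx
        · rw [hy];  simp only [mul_zero, add_zero]
          have : 0 < x ^ 2 := by positivity
          nlinarith
        · exact absurd hy hx
      · nlinarith [sq_nonneg (2 * d₁ * x + (d₃ - d₁ - d₂) * y), pow_pos (abs_pos.mpr hy) 2, sq_abs y]
    simp only [Fin.sum_univ_three, hC]
    simp [Matrix.cons_val_zero, Matrix.cons_val_one]
    nlinarith [hpos]
end

section
/- Under Condition A (Au = u, uᵀA = uᵀ) and the d-parametrization of A (diagonal d₁,d₂,d₃; A₁₂ = d₃+L, A₁₃ = d₂+K, A₂₁ = d₃+K, A₂₃ = d₁+L, A₃₁ = d₂+L, A₃₂ = d₁+K, with d₁+d₂+d₃+K+L = 1), the symmetrized matrix (A + Aᵀ − B)/2 equals the matrix C with diagonal d₁, d₂, d₃ and off-diagonal entries (d₃−d₁−d₂)/2, (d₂−d₁−d₃)/2, (d₁−d₂−d₃)/2; in particular pᵀ(A − ½B)p is independent of K and L. -/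
open Finset Matrix

/-- Under the d-parametrization of `A`, the symmetrized matrix `(A + Aᵀ − B)/2` equals `C`;
in particular the quadratic form `pᵀ(A − ½B)p` is independent of `K` and `L`. -/
theorem symmetrized_matrix_eq_C
    (d₁ d₂ d₃ K L : ℝ) (hsum : d₁ + d₂ + d₃ + K + L = 1)
    (A : Matrix (Fin 3) (Fin 3) ℝ)
    (hA : A = !![d₁, d₃ + L, d₂ + K; d₃ + K, d₂, d₁ + L; d₂ + L, d₁ + K, d₃])
    (B : Matrix (Fin 3) (Fin 3) ℝ)
    (hB : B = !![0, 1, 1; 1, 0, 1; 1, 1, 0])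
    (C : Matrix (Fin 3) (Fin 3) ℝ)
    (hC : C = !![d₁, (d₃ - d₁ - d₂) / 2, (d₂ - d₁ - d₃) / 2;
                 (d₃ - d₁ - d₂) / 2, d₂, (d₁ - d₂ - d₃) / 2;
                 (d₂ - d₁ - d₃) / 2, (d₁ - d₂ - d₃) / 2, d₃]) :
    (1 / 2 : ℝ) • (A + Aᵀ - B) = C ∧
      ∀ p : Fin 3 → ℝ,
        ∑ i, ∑ j, p i * (A i j - B i j / 2) * p j = ∑ i, ∑ j, p i * C i j * p j := by
  have hK : K = 1 - d₁ - d₂ - d₃ - L := by linarith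
  subst hK hA hB hC
  constructor
  · ext i j
    fin_cases i <;> fin_cases j <;>
      simp [Matrix.transpose_apply, Matrix.smul_apply, Matrix.sub_apply, Matrix.add_apply,
        Matrix.cons_val_zero, Matrix.cons_val_one, Matrix.head_cons, Matrix.vecHead, Matrix.vecTail] <;> ring
  · intro p
    simp [Fin.sum_univ_three, Matrix.cons_val_zero, Matrix.cons_val_one, Matrix.head_cons, Matrix.vecHead, Matrix.vecTail]
    ring
end

section
/- The Jacobian matrix of the map p ↦ (p₁^γ E₁(p), p₂^γ E₂(p), p₃^γ E₃(p)) evaluated at the equilibrium p* = (1,1,1)ᵀ is independent of γ and equals J = ¼·[[−2a₁₁, −2a₂₁+1, −2a₃₁+1],[−2a₁₂+1, −2a₂₂, −2a₃₂+1],[−2a₁₃+1, −2a₂₃+1, −2a₃₃]]. -/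
open Finset Matrix

/-- The Jacobian at `p* = (1,1,1)ᵀ` of the map `p ↦ (pᵢ^γ Eᵢ(p))ᵢ` is independent of `γ`
and equals `J = ¼[[−2a₁₁, −2a₂₁+1, −2a₃₁+1],[−2a₁₂+1, −2a₂₂, −2a₃₂+1],[−2a₁₃+1, −2a₂₃+1, −2a₃₃]]`. -/
theorem jacobian_at_equilibrium
    (γ : ℝ) (hγ : 0 ≤ γ)
    (A : Matrix (Fin 3) (Fin 3) ℝ)
    (u : Fin 3 → ℝ) (hu : u = fun _ => (1 : ℝ))
    (hAu : A.mulVec u = u) (huA : Matrix.vecMul u A = u)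
    (B : Matrix (Fin 3) (Fin 3) ℝ)
    (hB : B = !![0, 1, 1; 1, 0, 1; 1, 1, 0])
    (f : (Fin 3 → ℝ) → Fin 3 → ℝ)
    (hf : ∀ p h, f p h = (∑ i, p i * A i h) / (∑ i, p i * B i h))
    (E : (Fin 3 → ℝ) → Fin 3 → ℝ)
    (hE : ∀ p, E p = B.mulVec (f p) - A.mulVec u)
    (J : Matrix (Fin 3) (Fin 3) ℝ)
    (hJ : J = (1 / 4 : ℝ) •
      !![-2 * A 0 0, -2 * A 1 0 + 1, -2 * A 2 0 + 1;
         -2 * A 0 1 + 1, -2 * A 1 1, -2 * A 2 1 + 1;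
         -2 * A 0 2 + 1, -2 * A 1 2 + 1, -2 * A 2 2]) :
    ∀ i j : Fin 3,
      fderiv ℝ (fun p : Fin 3 → ℝ => (p i) ^ γ * E p i) (fun _ => (1 : ℝ))
        (Pi.single j 1) = J i j := by
  intro i j
  -- column sums of A are 1
  have hcol : ∀ h, ∑ k, A k h = 1 := by
    intro h
    have := congrFun huA h
    simpa [Matrix.vecMul, dotProduct, hu] using this
  -- row sums of A are 1
  have hrow : ∀ k, ∑ h, A k h = 1 := by
    intro k
    have := congrFun hAu k
    simpa [Matrix.mulVec, dotProduct, hu] using this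
  set p₀ : Fin 3 → ℝ := fun _ => (1 : ℝ) with hp₀
  -- continuous linear maps
  set N : Fin 3 → ((Fin 3 → ℝ) →L[ℝ] ℝ) :=
    fun h => ∑ k, A k h • (ContinuousLinearMap.proj k : (Fin 3 → ℝ) →L[ℝ] ℝ) with hN
  set D : Fin 3 → ((Fin 3 → ℝ) →L[ℝ] ℝ) :=
    fun h => ∑ k, B k h • (ContinuousLinearMap.proj k : (Fin 3 → ℝ) →L[ℝ] ℝ) with hD
  have hNapp : ∀ h p, N h p = ∑ k, p k * A k h := by
    intro h p
    simp [hN, ContinuousLinearMap.sum_apply, mul_comm]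
  have hDapp : ∀ h p, D h p = ∑ k, p k * B k h := by
    intro h p
    simp [hD, ContinuousLinearMap.sum_apply, mul_comm]
  have hD2 : ∀ h, D h p₀ = 2 := by
    intro h
    rw [hDapp, hB]
    simp only [hp₀]
    fin_cases h <;>
      norm_num [Fin.sum_univ_three, Matrix.cons_val_zero, Matrix.cons_val_one,
        Matrix.head_cons, Matrix.vecHead, Matrix.vecTail, Function.comp, Matrix.cons_val_two]
  have hN1 : ∀ h, N h p₀ = 1 := by
    intro h
    rw [hNapp]
    simp only [hp₀, one_mul]
    exact hcol h
  -- derivative of f · h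
  have hfd : ∀ h : Fin 3, HasFDerivAt (fun p => f p h)
      ((N h p₀) • ((-((D h p₀) ^ 2)⁻¹) • (D h)) + ((D h p₀)⁻¹) • (N h)) p₀ := by
    intro h
    have hNd : HasFDerivAt (fun p => N h p) (N h) p₀ := (N h).hasFDerivAt
    have hDd : HasFDerivAt (fun p => D h p) (D h) p₀ := (D h).hasFDerivAt
    have hinv : HasDerivAt (fun y : ℝ => y⁻¹) (-((D h p₀) ^ 2)⁻¹) (D h p₀) :=
      hasDerivAt_inv (by rw [hD2]; norm_num)
    have hinvc : HasFDerivAt (fun p => (D h p)⁻¹) ((-((D h p₀) ^ 2)⁻¹) • (D h)) p₀ :=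
      hinv.comp_hasFDerivAt p₀ hDd
    have := hNd.mul hinvc
    have heq : (fun p => f p h) = fun p => N h p * (D h p)⁻¹ := by
      funext p
      rw [hf, hNapp, hDapp, div_eq_mul_inv]
    rw [heq]
    exact this
  -- derivative of the E part
  have hEd : HasFDerivAt (fun p => E p i)
      (∑ h, B i h • ((N h p₀) • ((-((D h p₀) ^ 2)⁻¹) • (D h)) + ((D h p₀)⁻¹) • (N h))) p₀ := by
    have heq : (fun p => E p i) = fun p => (∑ h, B i h * f p h) - (A.mulVec u) i := by
      funext p
      rw [hE]
      simp [Matrix.mulVec, dotProduct]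
    rw [heq]
    exact (HasFDerivAt.fun_sum fun h _ => (hfd h).const_mul (B i h)).sub_const _
  -- derivative of rpow part
  have hrd : HasFDerivAt (fun p : Fin 3 → ℝ => (p i) ^ γ)
      ((γ * (1:ℝ) ^ (γ - 1)) • (ContinuousLinearMap.proj i : (Fin 3 → ℝ) →L[ℝ] ℝ)) p₀ := by
    have h1 : HasDerivAt (fun x : ℝ => x ^ γ) (γ * (1:ℝ) ^ (γ - 1)) (p₀ i) :=
      Real.hasDerivAt_rpow_const (Or.inl one_ne_zero)
    have h2 : HasFDerivAt (fun p : Fin 3 → ℝ => p i)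
        (ContinuousLinearMap.proj i : (Fin 3 → ℝ) →L[ℝ] ℝ) p₀ :=
      (ContinuousLinearMap.proj i : (Fin 3 → ℝ) →L[ℝ] ℝ).hasFDerivAt
    exact h1.comp_hasFDerivAt p₀ h2
  have hprod := hrd.fun_mul hEd
  -- E p₀ i = 0
  have hE0 : E p₀ i = 0 := by
    rw [hE, hAu]
    have hfp : ∀ h, f p₀ h = 1 / 2 := by
      intro h
      rw [hf]
      have h2 : ∑ k, p₀ k * B k h = 2 := by rw [← hDapp]; exact hD2 h
      rw [h2]
      have h1 : ∑ k, p₀ k * A k h = 1 := by rw [← hNapp]; exact hN1 h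
      rw [h1]
    simp only [Pi.sub_apply, Matrix.mulVec, dotProduct, hfp, hu, hp₀, hB]
    fin_cases i <;>
      norm_num [Fin.sum_univ_three, Matrix.cons_val_zero, Matrix.cons_val_one,
        Matrix.head_cons, Matrix.vecHead, Matrix.vecTail, Function.comp, Matrix.cons_val_two,
        show ∀ h, f (fun _ => (1 : ℝ)) h = 1 / 2 from hfp]
  rw [hprod.fderiv]
  simp only [ContinuousLinearMap.add_apply, ContinuousLinearMap.smul_apply,
    ContinuousLinearMap.sum_apply, ContinuousLinearMap.coe_smul', Pi.smul_apply,
    ContinuousLinearMap.proj_apply]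
  rw [hE0]
  have hNe : ∀ h, N h (Pi.single j 1) = A j h := by
    intro h
    rw [hNapp]
    rw [Finset.sum_eq_single j] <;> simp +contextual [Pi.single_apply]
  have hDe : ∀ h, D h (Pi.single j 1) = B j h := by
    intro h
    rw [hDapp]
    rw [Finset.sum_eq_single j] <;> simp +contextual [Pi.single_apply]
  simp only [hNe, hDe, hN1, hD2]
  rw [hp₀]
  simp only [Real.one_rpow, smul_eq_mul, one_mul, zero_mul, zero_smul, add_zero, zero_add, mul_zero]
  rw [hJ, hB]
  have hr0 := hrow 0
  have hr1 := hrow 1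
  have hr2 := hrow 2
  rw [Fin.sum_univ_three] at hr0 hr1 hr2
  fin_cases i <;> fin_cases j <;>
    simp [Fin.sum_univ_three] <;> linarith
end

section
/- Let J = ¼·[[−2a₁₁, −2a₂₁+1, −2a₃₁+1],[−2a₁₂+1, −2a₂₂, −2a₃₂+1],[−2a₁₃+1, −2a₂₃+1, −2a₃₃]] where A is parametrized as A = [[d₁, d₃+L, d₂+K],[d₃+K, d₂, d₁+L],[d₂+L, d₁+K, d₃]] with d₁+d₂+d₃+K+L = 1. Then Ju = 0 for u = (1,1,1)ᵀ, and the characteristic polynomial of 4J is −t(t² + 2(d₁+d₂+d₃)t + 3Ĥ), where Ĥ = 4(d₁d₂+d₂d₃+d₃d₁) − (d₁+d₂+d₃)² + (K−L)². -/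
open Matrix

/-- For the parametrized Jacobian `J`, `Ju = 0` and the characteristic polynomial of `4J`
is `−t(t² + 2(d₁+d₂+d₃)t + 3Hhat)` where `Hhat = 4(d₁d₂+d₂d₃+d₃d₁) − (d₁+d₂+d₃)² + (K−L)²`. -/
theorem jacobian_char_poly
    (d₁ d₂ d₃ K L : ℝ) (hsum : d₁ + d₂ + d₃ + K + L = 1)
    (A : Matrix (Fin 3) (Fin 3) ℝ)
    (hA : A = !![d₁, d₃ + L, d₂ + K; d₃ + K, d₂, d₁ + L; d₂ + L, d₁ + K, d₃])
    (J : Matrix (Fin 3) (Fin 3) ℝ)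
    (hJ : J = (1 / 4 : ℝ) •
      !![-2 * A 0 0, -2 * A 1 0 + 1, -2 * A 2 0 + 1;
         -2 * A 0 1 + 1, -2 * A 1 1, -2 * A 2 1 + 1;
         -2 * A 0 2 + 1, -2 * A 1 2 + 1, -2 * A 2 2])
    (Hhat : ℝ)
    (hHhat : Hhat = 4 * (d₁ * d₂ + d₂ * d₃ + d₃ * d₁) - (d₁ + d₂ + d₃) ^ 2 + (K - L) ^ 2) :
    J.mulVec (fun _ => (1 : ℝ)) = 0 ∧
      ∀ t : ℝ, ((4 : ℝ) • J - t • (1 : Matrix (Fin 3) (Fin 3) ℝ)).det =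
        -t * (t ^ 2 + 2 * (d₁ + d₂ + d₃) * t + 3 * Hhat) := by
  subst hA hJ hHhat
  constructor
  · funext i
    fin_cases i <;>
      simp [Matrix.mulVec, dotProduct, Fin.sum_univ_three] <;> linarith
  · intro t
    rw [Matrix.det_fin_three]
    simp [Matrix.smul_apply, Matrix.sub_apply, Matrix.one_apply]
    have hL : L = 1 - d₁ - d₂ - d₃ - K := by linarith
    subst hL
    ring
end

section
/- Suppose d₂ > 0, d₃ > 0, and d₂ − d₃ − (K−L) < 0. Then the quadratic equation U² + (2d₃+(K−L))U − (−a₂₁+a₃₁)a₃₃ = 0 with a₂₁ = d₃+K, a₃₁ = d₂+L, a₃₃ = d₃ has exactly one root U = (−(2d₃+K−L) + √(4d₂d₃+(K−L)²))/2 satisfying −a₂₁+a₃₁ ≤ U < 0, and the other root (−(2d₃+K−L) − √(4d₂d₃+(K−L)²))/2 does not satisfy U ≥ −a₂₁+a₃₁. -/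
/-- The quadratic `U² + (2d₃+(K−L))U − (−a₂₁+a₃₁)a₃₃ = 0` (with `a₂₁ = d₃+K`,
`a₃₁ = d₂+L`, `a₃₃ = d₃`) has exactly one root satisfying `−a₂₁+a₃₁ ≤ U < 0`, namely
`U = (−(2d₃+K−L) + √(4d₂d₃+(K−L)²))/2`; the other root does not satisfy `U ≥ −a₂₁+a₃₁`. -/
theorem quadratic_fixed_point_root
    (d₁ d₂ d₃ K L : ℝ) (hd₂ : 0 < d₂) (hd₃ : 0 < d₃)
    (hsum : d₁ + d₂ + d₃ + K + L = 1)
    (a₂₁ a₃₁ a₃₃ : ℝ) (ha₂₁ : a₂₁ = d₃ + K) (ha₃₁ : a₃₁ = d₂ + L) (ha₃₃ : a₃₃ = d₃)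
    (hneg : d₂ - d₃ - (K - L) < 0)
    (Uplus Uminus : ℝ)
    (hUp : Uplus = (-(2 * d₃ + K - L) + Real.sqrt (4 * d₂ * d₃ + (K - L) ^ 2)) / 2)
    (hUm : Uminus = (-(2 * d₃ + K - L) - Real.sqrt (4 * d₂ * d₃ + (K - L) ^ 2)) / 2) :
    (Uplus ^ 2 + (2 * d₃ + (K - L)) * Uplus - (-a₂₁ + a₃₁) * a₃₃ = 0) ∧
    (-a₂₁ + a₃₁ ≤ Uplus) ∧ (Uplus < 0) ∧
    (Uminus ^ 2 + (2 * d₃ + (K - L)) * Uminus - (-a₂₁ + a₃₁) * a₃₃ = 0) ∧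
    ¬(-a₂₁ + a₃₁ ≤ Uminus) := by
  set s := Real.sqrt (4 * d₂ * d₃ + (K - L) ^ 2) with hs
  have hD : (0:ℝ) ≤ 4 * d₂ * d₃ + (K - L) ^ 2 := by positivity
  have hs0 : 0 ≤ s := Real.sqrt_nonneg _
  have hs2 : s ^ 2 = 4 * d₂ * d₃ + (K - L) ^ 2 := Real.sq_sqrt hD
  subst hUp hUm
  rw [ha₂₁, ha₃₁, ha₃₃]
  refine ⟨by ring_nf; nlinarith [hs2], ?_, ?_, by ring_nf; nlinarith [hs2], ?_⟩
  · nlinarith [sq_nonneg (s - (2*d₂ - (K - L))), sq_nonneg (s + (2*d₂ - (K - L)))]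
  · nlinarith [sq_nonneg (s - (2*d₃ + (K - L))), sq_nonneg (s + (2*d₃ + (K - L)))]
  · push_neg
    nlinarith [sq_nonneg (s - (2*d₂ - (K - L))), sq_nonneg (s + (2*d₂ - (K - L)))]
end
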